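/- arXiv:1001.1766 — 2 statements merged into one kernel-verified Lean document; each statement's English description precedes it below -/
import Mathlib

section
/- Let K ≥ 1 and L ≥ 2 be integers, S = KL, and let M₀ be the (S−1)×S matrix with rows indexed by 0 ≤ s ≤ S−2 and columns by pairs (k,ℓ), 0 ≤ k ≤ K−1, 0 ≤ ℓ ≤ L−1, with (s,(k,ℓ)) entry equal to (d/dz)^s(z^k e^{ℓz})(0). Let p_{ℓ,k} be the coefficients of the Hermite–Padé approximants of type I for 1, e^z, …, e^{(L−1)z} with parameters n₀ = ⋯ = n_{L−1} = K, i.e. p_{ℓ,k} = Σ_{γ ∈ Λ(ℓ,k)} ∏_{p=0, p≠ℓ}^{L−1} ((−1)^{γ_p}/(ℓ−p)^{γ_p+K})·C(γ_p+K−1, K−1). Then M₀ has rank S−1, and the vector x with components x_{(k,ℓ)} = p_{ℓ,k}/k! is a nonzero vector in the kernel of M₀, i.e. Σ_{ℓ=0}^{L−1} Σ_{k=0}^{K−1} (p_{ℓ,k}/k!)·(d/dz)^s(z^k e^{ℓz})(0) = 0 for all 0 ≤ s ≤ S−2. -/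
/-!
The coefficients `p_{ℓ,k}` are those of the partial fraction decomposition
`1 / ∏_p (z - p)^K = ∑_ℓ ∑_k p_{ℓ,k} / (z - ℓ)^(k+1)`: the polynomial `∑_k p_{ℓ,k} (z - ℓ)^(K-1-k)`
truncates the Taylor expansion at `ℓ` of `∏_{p ≠ ℓ} (z - p)^(-K)`, a product of binomial series.
Expanding both sides at `z = ∞`, the left side is `O(z^(-KL))`, while
`(z - ℓ)^(-k-1) = ∑_s C(s,k) ℓ^(s-k) z^(-s-1)`; comparing coefficients of `z^(-s-1)` for
`s ≤ KL - 2` gives the kernel relations. For the rank, a vector `c` in the left kernel of `M₀`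
gives the polynomial `∑_s c_s z^s` of degree `< KL - 1` whose first `K` Hasse derivatives vanish at
each `ℓ`, so it is divisible by `∏_ℓ (z - ℓ)^K` and hence zero. The kernel vector is nonzero since
`p_{ℓ,K-1} = ∏_{p ≠ ℓ} (ℓ - p)^(-K)`.
-/

/-- The `(s,(k,ℓ))` entry of the matrix `M₀`: the `s`-th derivative of `Φ_{k,ℓ}(z) = z^k e^{ℓz}`
at `0`, namely `C(s,k) k! ℓ^{s−k}` if `k ≤ s` and `0` otherwise (with `0^0 = 1`). -/
def m0Entry (s k ℓ : ℕ) : ℕ :=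
  if k ≤ s then s.choose k * k.factorial * ℓ ^ (s - k) else 0

/-- The `(S−1) × S` matrix `M₀` (`S = KL`), with rows `0 ≤ s ≤ S−2` and columns indexed by
pairs `(k,ℓ)`, `0 ≤ k ≤ K−1`, `0 ≤ ℓ ≤ L−1`, viewed over `ℚ`. -/
def m0Mat (K L : ℕ) : Matrix (Fin (K * L - 1)) (Fin K × Fin L) ℚ :=
  Matrix.of fun s kl => ((m0Entry (s : ℕ) (kl.1 : ℕ) (kl.2 : ℕ) : ℕ) : ℚ)

/-- `Λ(ℓ,k)` for `m = L − 1` and `n₀ = ⋯ = n_{L−1} = K`: multi-indices `γ = (γ_p)_{p ≠ ℓ}`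
of nonnegative integers with `∑_{p ≠ ℓ} γ_p = K − k − 1`, encoded as functions
`γ : Fin L → ℕ` with `γ ℓ = 0`. -/
def lambdaSet (K L : ℕ) (ℓ : Fin L) (k : ℕ) : Finset (Fin L → ℕ) :=
  (Finset.Nat.antidiagonalTuple L (K - k - 1)).filter fun γ => γ ℓ = 0

/-- The coefficients `p_{ℓ,k}` of the Hermite–Padé approximants of type I for
`1, e^z, …, e^{(L−1)z}` with parameters `n₀ = ⋯ = n_{L−1} = K`. -/
def hpCoeff (K L : ℕ) (ℓ : Fin L) (k : ℕ) : ℚ :=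
  ∑ γ ∈ lambdaSet K L ℓ k, ∏ p ∈ Finset.univ.erase ℓ,
    ((-1) ^ (γ p) / (((ℓ : ℕ) : ℚ) - ((p : ℕ) : ℚ)) ^ (γ p + K) *
      ((γ p + K - 1).choose (K - 1) : ℚ))

open Finset

theorem Nat.sub_one_mul_add_self {L : ℕ} (hL : 0 < L) (K : ℕ) : (L - 1) * K + K = K * L := by
  rw [← Nat.succ_mul, Nat.succ_eq_add_one, Nat.sub_add_cancel hL, mul_comm]

namespace PowerSeries

theorem X_pow_dvd_coe_iff {R : Type*} [CommSemiring R] {n : ℕ} {p : Polynomial R} :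
    X ^ n ∣ (p : R⟦X⟧) ↔ Polynomial.X ^ n ∣ p := by
  simp [X_pow_dvd_iff, Polynomial.X_pow_dvd_iff]

variable {R : Type*} [CommRing R]

theorem rescale_invOneSubPow_mul_pow (a : R) (d : ℕ) :
    rescale a (invOneSubPow R d).val * (1 - C a * X) ^ d = 1 := by
  rw [← rescale_X, ← map_one (rescale a), ← map_sub, ← map_pow, ← map_mul,
    ← invOneSubPow_inv_eq_one_sub_pow, Units.val_inv, map_one]

theorem coeff_rescale_invOneSubPow_succ (a : R) (d n : ℕ) :
    coeff n (rescale a (invOneSubPow R (d + 1)).val) = a ^ n * (d + n).choose d := by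
  rw [coeff_rescale, invOneSubPow_val_succ_eq_mk_add_choose, coeff_mk]

theorem isUnit_one_sub_C_mul_X_pow (a : R) (d : ℕ) : IsUnit ((1 - C a * X) ^ d) :=
  .of_mul_eq_one_right _ (rescale_invOneSubPow_mul_pow a d)

theorem coeff_succ_X_pow_succ_mul_rescale_invOneSubPow (a : R) (k s : ℕ) :
    coeff (s + 1) (X ^ (k + 1) * rescale a (invOneSubPow R (k + 1)).val) =
      s.choose k * a ^ (s - k) := by
  rw [coeff_X_pow_mul']
  split_ifs with hks
  · rw [coeff_rescale_invOneSubPow_succ, show k + (s + 1 - (k + 1)) = s by omega,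
      Nat.add_sub_add_right, mul_comm]
  · rw [Nat.choose_eq_zero_of_lt (by omega), Nat.cast_zero, zero_mul]

variable {F : Type*} [Field F]

/-- The expansion of `(c + X)⁻ᵈ` at `0`. -/
def invCAddXPow (c : F) (d : ℕ) : F⟦X⟧ :=
  mk fun n => (-1) ^ n / c ^ (n + d) * ((n + d - 1).choose (d - 1) : F)

theorem invCAddXPow_mul_pow {c : F} (hc : c ≠ 0) {d : ℕ} (hd : 0 < d) :
    invCAddXPow c d * (C c + X) ^ d = 1 := by
  obtain ⟨e, rfl⟩ : ∃ e, d = e + 1 := ⟨d - 1, by omega⟩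
  have hser : invCAddXPow c (e + 1) =
      C (c⁻¹ ^ (e + 1)) * rescale (-c⁻¹) (invOneSubPow F (e + 1)).val := by
    ext n
    rw [invCAddXPow, coeff_mk, coeff_C_mul, coeff_rescale_invOneSubPow_succ,
      show n + (e + 1) - 1 = e + n by omega, Nat.add_sub_cancel, Nat.add_comm e n,
      neg_eq_neg_one_mul, mul_pow, div_eq_mul_inv, ← inv_pow, pow_add]
    ring
  have hpow : (C c + X) ^ (e + 1) = C (c ^ (e + 1)) * (1 - C (-c⁻¹) * X) ^ (e + 1) := by
    rw [map_pow, ← mul_pow, mul_sub, mul_one, ← mul_assoc, ← map_mul, mul_neg,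
      mul_inv_cancel₀ hc, map_neg, map_one, neg_one_mul, sub_neg_eq_add]
  rw [hser, hpow, mul_mul_mul_comm, ← map_mul, ← mul_pow, inv_mul_cancel₀ hc, one_pow,
    map_one, one_mul, rescale_invOneSubPow_mul_pow]

end PowerSeries

namespace Polynomial

section CommSemiring

variable {R : Type*} [CommSemiring R]

theorem eval_hasseDeriv_sum_C_mul_X_pow {ι : Type*} (s : Finset ι) (c : ι → R) (e : ι → ℕ)
    (k : ℕ) (a : R) :
    (hasseDeriv k (∑ i ∈ s, C (c i) * X ^ e i)).eval a =
      ∑ i ∈ s, c i * ((e i).choose k * a ^ (e i - k)) := by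
  simp only [map_sum, eval_finsetSum, C_mul_X_pow_eq_monomial, hasseDeriv_monomial,
    eval_monomial]
  exact sum_congr rfl fun i _ => by ring

theorem taylor_prod {ι : Type*} (r : R) (s : Finset ι) (f : ι → R[X]) :
    taylor r (∏ i ∈ s, f i) = ∏ i ∈ s, taylor r (f i) :=
  map_prod (taylorAlgHom r) f s

theorem reflect_sum {ι : Type*} (N : ℕ) (s : Finset ι) (f : ι → R[X]) :
    reflect N (∑ i ∈ s, f i) = ∑ i ∈ s, reflect N (f i) :=
  map_sum (⟨⟨reflect N, reflect_zero⟩, fun f g => reflect_add f g N⟩ : R[X] →+ R[X]) f s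

theorem reflect_prod {ι : Type*} (s : Finset ι) (f : ι → R[X]) {N : ℕ}
    (hf : ∀ i ∈ s, (f i).natDegree ≤ N) :
    reflect (#s * N) (∏ i ∈ s, f i) = ∏ i ∈ s, reflect N (f i) := by
  classical
  induction s using Finset.induction_on with
  | empty => simp
  | insert i s hi ih =>
    have hs : (∏ j ∈ s, f j).natDegree ≤ #s * N :=
      le_trans (natDegree_prod_le _ _) <| (sum_le_card_nsmul _ _ _ fun j hj =>
        hf j (mem_insert_of_mem hj)).trans_eq (smul_eq_mul _ _)
    rw [prod_insert hi, card_insert_of_notMem hi, add_comm, add_mul, one_mul,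
      reflect_mul _ _ (hf i (mem_insert_self i s)) hs,
      ih fun j hj => hf j (mem_insert_of_mem hj), prod_insert hi]

theorem reflect_pow (f : R[X]) {N : ℕ} (hf : f.natDegree ≤ N) (n : ℕ) :
    reflect (n * N) (f ^ n) = reflect N f ^ n := by
  simpa using reflect_prod (range n) (fun _ => f) fun _ _ => hf

end CommSemiring

theorem reflect_X_sub_C_pow {R : Type*} [CommRing R] (a : R) (n : ℕ) :
    reflect n ((X - C a) ^ n) = (1 - C a * X) ^ n := by
  simpa [reflect_sub, reflect_C] using reflect_pow (X - C a) (natDegree_X_sub_C_le a) n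

theorem eq_zero_of_forall_X_sub_C_pow_dvd {F ι : Type*} [Field F] [Fintype ι] {a : ι → F}
    (ha : Function.Injective a) {K : ℕ} {f : F[X]} (hdvd : ∀ i, (X - C (a i)) ^ K ∣ f)
    (hdeg : f.natDegree < K * Fintype.card ι) : f = 0 := by
  by_contra hf
  have hprod : ∏ i, (X - C (a i)) ^ K ∣ f :=
    Fintype.prod_dvd_of_coprime (fun i j hij => (pairwise_coprime_X_sub_C ha hij).pow) hdvd
  have hdeg_prod : (∏ i, (X - C (a i)) ^ K).natDegree = K * Fintype.card ι := by
    rw [natDegree_prod _ _ fun i _ => pow_ne_zero _ (X_sub_C_ne_zero _)]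
    simp [mul_comm]
  exact (natDegree_le_of_dvd hprod hf).not_gt (hdeg_prod ▸ hdeg)

end Polynomial

section PartialFractions

open Polynomial

theorem lambdaSet_eq_piAntidiag (K L : ℕ) (ℓ : Fin L) (k : ℕ) :
    lambdaSet K L ℓ k = piAntidiag (univ.erase ℓ) (K - k - 1) := by
  ext γ
  simp only [lambdaSet, mem_filter, Nat.mem_antidiagonalTuple, mem_piAntidiag, mem_erase,
    mem_univ, and_true, ← sum_erase_add univ γ (mem_univ ℓ)]
  constructor
  · rintro ⟨hsum, hℓ⟩
    exact ⟨by rwa [hℓ, add_zero] at hsum, fun i hi hiℓ => hi (hiℓ ▸ hℓ)⟩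
  · rintro ⟨hsum, hsupp⟩
    have hℓ : γ ℓ = 0 := by_contra fun h => hsupp ℓ h rfl
    exact ⟨by rw [hℓ, add_zero, hsum], hℓ⟩

theorem natCast_sub_natCast_ne_zero_of_mem_erase {L : ℕ} {ℓ p : Fin L} (hp : p ∈ univ.erase ℓ) :
    ((ℓ : ℕ) : ℚ) - ((p : ℕ) : ℚ) ≠ 0 :=
  sub_ne_zero.2 fun h => (ne_of_mem_erase hp) (Fin.val_injective (Nat.cast_injective h)).symm

noncomputable def invCofactorSeries (K L : ℕ) (ℓ : Fin L) : PowerSeries ℚ :=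
  ∏ p ∈ univ.erase ℓ, PowerSeries.invCAddXPow (((ℓ : ℕ) : ℚ) - ((p : ℕ) : ℚ)) K

theorem coeff_invCofactorSeries (K L : ℕ) (ℓ : Fin L) {j : ℕ} (hj : j < K) :
    PowerSeries.coeff j (invCofactorSeries K L ℓ) = hpCoeff K L ℓ (K - 1 - j) := by
  rw [invCofactorSeries, PowerSeries.coeff_prod, hpCoeff, lambdaSet_eq_piAntidiag,
    show K - (K - 1 - j) - 1 = j by omega, finsuppAntidiag, sum_map,
    ← sum_attach (piAntidiag _ _)]
  simp only [PowerSeries.invCAddXPow, PowerSeries.coeff_mk]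
  rfl

noncomputable def cofactorPoly (K L : ℕ) (ℓ : Fin L) : ℚ[X] :=
  ∏ p ∈ univ.erase ℓ, (X - C ((p : ℕ) : ℚ)) ^ K

/-- `principalPartNum K L ℓ / (X - ℓ)^K = ∑_k p_{ℓ,k} / (X - ℓ)^(k+1)` is the principal part at `ℓ`
of the partial fraction decomposition of `1 / ∏_p (X - p)^K`. -/
noncomputable def principalPartNum (K L : ℕ) (ℓ : Fin L) : ℚ[X] :=
  ∑ k ∈ range K, C (hpCoeff K L ℓ k) * (X - C ((ℓ : ℕ) : ℚ)) ^ (K - 1 - k)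

theorem natDegree_cofactorPoly_le (K L : ℕ) (ℓ : Fin L) :
    (cofactorPoly K L ℓ).natDegree ≤ (L - 1) * K := by
  refine le_trans (natDegree_prod_le _ _) ((sum_le_card_nsmul _ _ K fun p _ =>
    (natDegree_pow_le_of_le K (natDegree_X_sub_C_le _)).trans_eq (mul_one K)).trans_eq ?_)
  rw [card_erase_of_mem (mem_univ ℓ), card_univ, Fintype.card_fin, smul_eq_mul]

theorem natDegree_principalPartNum_le (K L : ℕ) (ℓ : Fin L) :
    (principalPartNum K L ℓ).natDegree ≤ K - 1 := by
  refine natDegree_sum_le_of_forall_le _ _ fun k hk => natDegree_C_mul_le _ _ |>.trans ?_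
  exact (natDegree_pow_le_of_le _ (natDegree_X_sub_C_le _)).trans (by omega)

theorem coeff_taylor_principalPartNum (K L : ℕ) (ℓ : Fin L) {j : ℕ} (hj : j < K) :
    (taylor ((ℓ : ℕ) : ℚ) (principalPartNum K L ℓ)).coeff j = hpCoeff K L ℓ (K - 1 - j) := by
  simp only [principalPartNum, map_sum, taylor_mul, taylor_C, taylor_pow, map_sub, taylor_X,
    add_sub_cancel_right, finsetSum_coeff, coeff_C_mul_X_pow]
  rw [sum_eq_single (K - 1 - j) (fun k hk hne => if_neg (by simp at hk; omega))
    (fun h => absurd (mem_range.2 (by omega)) h), if_pos (by omega)]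

theorem coe_taylor_cofactorPoly (K L : ℕ) (ℓ : Fin L) :
    ((taylor ((ℓ : ℕ) : ℚ) (cofactorPoly K L ℓ) : ℚ[X]) : PowerSeries ℚ) =
      ∏ p ∈ univ.erase ℓ,
        (PowerSeries.C (((ℓ : ℕ) : ℚ) - ((p : ℕ) : ℚ)) + PowerSeries.X) ^ K := by
  rw [cofactorPoly, taylor_prod, ← coeToPowerSeries.ringHom_apply, map_prod]
  refine prod_congr rfl fun p _ => ?_
  rw [taylor_pow, map_sub, taylor_X, taylor_C, coeToPowerSeries.ringHom_apply,
    Polynomial.coe_pow, Polynomial.coe_sub, Polynomial.coe_add, coe_X, coe_C, coe_C, map_sub]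
  ring

theorem X_sub_C_pow_dvd_principalPartNum_mul_cofactorPoly_sub_one {K : ℕ} (hK : 0 < K) (L : ℕ)
    (ℓ : Fin L) :
    (X - C ((ℓ : ℕ) : ℚ)) ^ K ∣ principalPartNum K L ℓ * cofactorPoly K L ℓ - 1 := by
  rw [X_sub_C_pow_dvd_iff, ← taylor_apply, ← PowerSeries.X_pow_dvd_coe_iff]
  have hinv : invCofactorSeries K L ℓ *
      ((taylor ((ℓ : ℕ) : ℚ) (cofactorPoly K L ℓ) : ℚ[X]) : PowerSeries ℚ) = 1 := by
    rw [coe_taylor_cofactorPoly, invCofactorSeries, ← prod_mul_distrib]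
    exact prod_eq_one fun p hp =>
      PowerSeries.invCAddXPow_mul_pow (natCast_sub_natCast_ne_zero_of_mem_erase hp) hK
  have htrunc : PowerSeries.X ^ K ∣
      ((taylor ((ℓ : ℕ) : ℚ) (principalPartNum K L ℓ) : ℚ[X]) : PowerSeries ℚ) -
        invCofactorSeries K L ℓ := by
    refine PowerSeries.X_pow_dvd_iff.2 fun j hj => ?_
    rw [map_sub, coeff_coe, coeff_taylor_principalPartNum K L ℓ hj,
      coeff_invCofactorSeries K L ℓ hj, sub_self]
  rw [map_sub, taylor_mul, taylor_one, C_1, Polynomial.coe_sub, Polynomial.coe_mul,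
    Polynomial.coe_one, ← hinv, ← sub_mul]
  exact htrunc.mul_right _

theorem sum_principalPartNum_mul_cofactorPoly {K L : ℕ} (hK : 0 < K) (hL : 0 < L) :
    ∑ ℓ : Fin L, principalPartNum K L ℓ * cofactorPoly K L ℓ = 1 := by
  rw [← sub_eq_zero]
  refine eq_zero_of_forall_X_sub_C_pow_dvd (K := K) (a := fun ℓ : Fin L => ((ℓ : ℕ) : ℚ))
    (Nat.cast_injective.comp Fin.val_injective) (fun ℓ₀ => ?_) ?_
  · rw [← add_sum_erase _ _ (mem_univ ℓ₀), add_sub_right_comm]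
    refine dvd_add (X_sub_C_pow_dvd_principalPartNum_mul_cofactorPoly_sub_one hK L ℓ₀)
      (dvd_sum fun ℓ hℓ => dvd_mul_of_dvd_right (dvd_prod_of_mem _ ?_) _)
    exact mem_erase.2 ⟨(ne_of_mem_erase hℓ).symm, mem_univ _⟩
  · have hdeg : ∀ ℓ,
        (principalPartNum K L ℓ * cofactorPoly K L ℓ).natDegree ≤ K - 1 + (L - 1) * K := fun ℓ =>
        natDegree_mul_le_of_le (natDegree_principalPartNum_le K L ℓ)
          (natDegree_cofactorPoly_le K L ℓ)
    refine (natDegree_sub_le _ _).trans_lt ?_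
    rw [natDegree_one, Fintype.card_fin]
    have := natDegree_sum_le_of_forall_le _ _ fun ℓ (_ : ℓ ∈ univ) => hdeg ℓ
    have := Nat.sub_one_mul_add_self hL K
    omega

theorem reflect_cofactorPoly (K L : ℕ) (ℓ : Fin L) :
    reflect ((L - 1) * K) (cofactorPoly K L ℓ) =
      ∏ p ∈ univ.erase ℓ, (1 - C ((p : ℕ) : ℚ) * X) ^ K := by
  have h := reflect_prod (univ.erase ℓ) (fun p : Fin L => (X - C ((p : ℕ) : ℚ)) ^ K) fun p _ =>
    (natDegree_pow_le_of_le K (natDegree_X_sub_C_le _)).trans_eq (mul_one K)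
  rw [card_erase_of_mem (mem_univ ℓ), card_univ, Fintype.card_fin] at h
  simpa only [reflect_X_sub_C_pow, cofactorPoly] using h

/-- The partial fraction identity `sum_principalPartNum_mul_cofactorPoly` read at `X = ∞`. -/
theorem X_pow_eq_sum_reflect {K L : ℕ} (hK : 0 < K) (hL : 0 < L) :
    (X : ℚ[X]) ^ (K * L) = ∑ ℓ : Fin L, ∑ k ∈ range K, C (hpCoeff K L ℓ k) * X ^ (k + 1) *
      ((1 - C ((ℓ : ℕ) : ℚ) * X) ^ (K - 1 - k) *
        ∏ p ∈ univ.erase ℓ, (1 - C ((p : ℕ) : ℚ) * X) ^ K) := by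
  conv_lhs => rw [← reflect_one, ← sum_principalPartNum_mul_cofactorPoly hK hL, reflect_sum]
  refine sum_congr rfl fun ℓ _ => ?_
  rw [principalPartNum, sum_mul, reflect_sum]
  refine sum_congr rfl fun k hk => ?_
  have hsplit : K * L = (k + 1) + ((K - 1 - k) + (L - 1) * K) := by
    have := Nat.sub_one_mul_add_self hL K
    have := mem_range.1 hk
    omega
  have hpow : ((X - C ((ℓ : ℕ) : ℚ)) ^ (K - 1 - k)).natDegree ≤ K - 1 - k :=
    (natDegree_pow_le_of_le _ (natDegree_X_sub_C_le _)).trans_eq (mul_one _)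
  rw [hsplit, mul_assoc, reflect_mul _ _ ((natDegree_C _).trans_le (Nat.zero_le _))
      (natDegree_mul_le_of_le hpow (natDegree_cofactorPoly_le K L ℓ)),
    reflect_mul _ _ hpow (natDegree_cofactorPoly_le K L ℓ), reflect_C, reflect_X_sub_C_pow,
    reflect_cofactorPoly]

end PartialFractions

section KernelVector

open PowerSeries

/-- By `X_pow_eq_sum_reflect`, `∑_{ℓ,k} p_{ℓ,k} X^(k+1) / (1 - ℓX)^(k+1) = X^(KL) / ∏_p (1 - pX)^K`,
and the `(s + 1)`-st coefficient of `X^(k+1) / (1 - ℓX)^(k+1)` is `C(s,k) ℓ^(s-k)`. -/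
theorem sum_hpCoeff_mul_choose_mul_pow_eq_zero {K L : ℕ} (hK : 0 < K) (hL : 0 < L) {s : ℕ}
    (hs : s + 1 < K * L) :
    ∑ ℓ : Fin L, ∑ k ∈ range K,
      hpCoeff K L ℓ k * (s.choose k * ((ℓ : ℕ) : ℚ) ^ (s - k)) = 0 := by
  set E : PowerSeries ℚ := ∏ p : Fin L, (1 - C ((p : ℕ) : ℚ) * X) ^ K
  set G : PowerSeries ℚ := ∑ ℓ : Fin L, ∑ k ∈ range K, C (hpCoeff K L ℓ k) *
    (X ^ (k + 1) * rescale ((ℓ : ℕ) : ℚ) (invOneSubPow ℚ (k + 1)).val)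
  have hEG : X ^ (K * L) = E * G := by
    have h := congrArg Polynomial.coeToPowerSeries.ringHom (X_pow_eq_sum_reflect hK hL)
    simp only [map_pow, map_sum, map_mul, map_sub, map_prod, map_one,
      Polynomial.coeToPowerSeries.ringHom_apply, Polynomial.coe_X, Polynomial.coe_C] at h
    rw [h, mul_sum]
    refine sum_congr rfl fun ℓ _ => ?_
    rw [mul_sum]
    refine sum_congr rfl fun k hk => ?_
    have hE : E = (1 - C ((ℓ : ℕ) : ℚ) * X) ^ (k + 1) *
        ((1 - C ((ℓ : ℕ) : ℚ) * X) ^ (K - 1 - k) *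
          ∏ p ∈ univ.erase ℓ, (1 - C ((p : ℕ) : ℚ) * X) ^ K) := by
      rw [← mul_assoc, ← pow_add, show k + 1 + (K - 1 - k) = K by simp at hk; omega,
        mul_prod_erase univ (fun p : Fin L => (1 - C ((p : ℕ) : ℚ) * X) ^ K) (mem_univ ℓ)]
    rw [hE]
    linear_combination (-C (hpCoeff K L ℓ k) * X ^ (k + 1) *
        ((1 - C ((ℓ : ℕ) : ℚ) * X) ^ (K - 1 - k) *
          ∏ p ∈ univ.erase ℓ, (1 - C ((p : ℕ) : ℚ) * X) ^ K)) *
      rescale_invOneSubPow_mul_pow (((ℓ : ℕ) : ℚ)) (k + 1)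
  have hE : IsUnit E :=
    IsUnit.prod_univ_iff.2 fun p => isUnit_one_sub_C_mul_X_pow _ K
  have hG : X ^ (K * L) ∣ G := hE.dvd_mul_left.1 (hEG ▸ dvd_rfl)
  have h := X_pow_dvd_iff.1 hG (s + 1) hs
  simpa only [G, map_sum, coeff_C_mul, coeff_succ_X_pow_succ_mul_rescale_invOneSubPow] using h

end KernelVector

theorem m0Entry_eq (s k ℓ : ℕ) :
    (m0Entry s k ℓ : ℚ) = k.factorial * (s.choose k * (ℓ : ℚ) ^ (s - k)) := by
  rw [m0Entry]
  split_ifs with hks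
  · push_cast
    ring
  · rw [Nat.choose_eq_zero_of_lt (by omega)]
    simp

theorem hpCoeff_sub_one_ne_zero {K : ℕ} (hK : 0 < K) (L : ℕ) (ℓ : Fin L) :
    hpCoeff K L ℓ (K - 1) ≠ 0 := by
  rw [hpCoeff, lambdaSet_eq_piAntidiag, show K - (K - 1) - 1 = 0 by omega, piAntidiag_zero,
    sum_singleton]
  refine prod_ne_zero_iff.2 fun p hp => ?_
  simp [natCast_sub_natCast_ne_zero_of_mem_erase hp]

open Polynomial in
theorem rank_m0Mat {K L : ℕ} (hK : 0 < K) (hL : 0 < L) : (m0Mat K L).rank = K * L - 1 := by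
  rw [← Matrix.rank_transpose, Matrix.rank, LinearMap.finrank_range_of_inj, Module.finrank_fin_fun]
  rw [← LinearMap.ker_eq_bot, LinearMap.ker_eq_bot']
  intro c hc
  set f : ℚ[X] := ∑ t : Fin (K * L - 1), C (c t) * X ^ (t : ℕ)
  have hroot (ℓ : Fin L) : (X - C ((ℓ : ℕ) : ℚ)) ^ K ∣ f := by
    rw [X_sub_C_pow_dvd_iff, ← taylor_apply, X_pow_dvd_iff]
    intro k hk
    have hentry := congrFun hc (⟨k, hk⟩, ℓ)
    simp only [Matrix.mulVecLin_apply, Matrix.mulVec, dotProduct, Matrix.transpose_apply,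
      m0Mat, Matrix.of_apply, m0Entry_eq, Pi.zero_apply] at hentry
    rw [taylor_coeff, eval_hasseDeriv_sum_C_mul_X_pow]
    refine (mul_eq_zero.1 ?_).resolve_left (Nat.cast_ne_zero.2 k.factorial_ne_zero)
    rw [mul_sum, ← hentry]
    exact sum_congr rfl fun t _ => by ring
  have hf : f = 0 := by
    refine eq_zero_of_forall_X_sub_C_pow_dvd (a := fun ℓ : Fin L => ((ℓ : ℕ) : ℚ))
      (Nat.cast_injective.comp Fin.val_injective) hroot ?_
    refine (natDegree_sum_le_of_forall_le _ _ (n := K * L - 1) fun t _ =>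
      (natDegree_C_mul_X_pow_le _ _).trans t.isLt.le).trans_lt ?_
    rw [Fintype.card_fin]
    exact Nat.sub_one_lt (Nat.mul_pos hK hL).ne'
  funext t
  have := congrArg (coeff · (t : ℕ)) hf
  simpa [f, finsetSum_coeff, coeff_C_mul_X_pow, Fin.val_inj] using this

theorem stmt13 (K L : ℕ) (hK : 1 ≤ K) (hL : 2 ≤ L) :
    (m0Mat K L).rank = K * L - 1 ∧
    (fun kl : Fin K × Fin L => hpCoeff K L kl.2 (kl.1 : ℕ) / ((kl.1 : ℕ).factorial : ℚ)) ≠ 0 ∧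
    ∀ s : Fin (K * L - 1),
      ∑ kl : Fin K × Fin L,
        (hpCoeff K L kl.2 (kl.1 : ℕ) / ((kl.1 : ℕ).factorial : ℚ)) * m0Mat K L s kl = 0 := by
  have hL' : 0 < L := by omega
  refine ⟨rank_m0Mat hK hL', fun h => ?_, fun s => ?_⟩
  · exact div_ne_zero (hpCoeff_sub_one_ne_zero hK L ⟨0, hL'⟩)
      (Nat.cast_ne_zero.2 (Nat.factorial_ne_zero _)) (congrFun h (⟨K - 1, by omega⟩, ⟨0, hL'⟩))
  · rw [← sum_hpCoeff_mul_choose_mul_pow_eq_zero hK hL' (s := s) (by omega), Fintype.sum_prod_type,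
      sum_comm]
    refine sum_congr rfl fun ℓ _ => ?_
    rw [← Fin.sum_univ_eq_sum_range (fun k => hpCoeff K L ℓ k * _)]
    refine sum_congr rfl fun k _ => ?_
    rw [m0Mat, Matrix.of_apply, m0Entry_eq]
    field_simp
end

section
/- Let K ≥ 1 and L ≥ 2 be integers. For every 0 ≤ k ≤ K−1, the rational number D_{K−1,L−1}·d_{L−1}^{k}/k! is an integer. Consequently, for 0 ≤ k ≤ K−1 and 0 ≤ ℓ ≤ L−1, the number y_{ℓ,k} = ± (D_{K−1,L−1}/k!)·d_{L−1}^{K−1}·C(L−1,ℓ)^K · Σ_{γ ∈ Λ(ℓ,k)} ∏_{p=0, p≠ℓ}^{L−1} ((−1)^{γ_p}/(ℓ−p)^{γ_p})·C(γ_p+K−1, K−1) is an integer. -/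
/-- `d_n = lcm(1, …, n)` (with `d_0 = 1`). -/
def dlcm (n : ℕ) : ℕ := (Finset.Icc 1 n).lcm id

/-- `D_{m,n} = m! / ∏_{q prime, q ≤ n} q^{v_q(m!)}`. -/
def Dmn (m n : ℕ) : ℕ :=
  m.factorial / ∏ q ∈ (Finset.range (n + 1)).filter Nat.Prime,
    q ^ (m.factorial.factorization q)

/-! Every `ℓ - p` with `p ≠ ℓ` divides `d_{L-1}`, and `∑_{p ≠ ℓ} γ_p = K - k - 1`, so splitting
`d_{L-1}^{K-1} = d_{L-1}^k · ∏_{p ≠ ℓ} d_{L-1}^{γ_p}` clears every denominator `(ℓ - p)^{γ_p}`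
and leaves the first claim's integer `D_{K-1,L-1} d_{L-1}^k / k!` as cofactor. -/

open Finset
open scoped Nat

lemma dvd_dlcm {i n : ℕ} (h1 : 1 ≤ i) (h2 : i ≤ n) : i ∣ dlcm n :=
  dvd_lcm (mem_Icc.mpr ⟨h1, h2⟩)

lemma dlcm_ne_zero (n : ℕ) : dlcm n ≠ 0 := by
  rw [dlcm, Ne, Finset.lcm_eq_zero_iff]
  rintro ⟨i, hi, rfl⟩
  simp at hi

lemma one_le_factorization_dlcm {q n : ℕ} (hq : q.Prime) (hqn : q ≤ n) :
    1 ≤ (dlcm n).factorization q := by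
  rw [← hq.pow_dvd_iff_le_factorization (dlcm_ne_zero n), pow_one]
  exact dvd_dlcm hq.one_lt.le hqn

lemma prod_pow_factorization_dvd {a : ℕ} (ha : a ≠ 0) (n : ℕ) :
    ∏ q ∈ (range (n + 1)).filter Nat.Prime, q ^ a.factorization q ∣ a := by
  have hsub : (range (n + 1)).filter Nat.Prime ⊆ (range (a + n + 1)).filter Nat.Prime :=
    filter_subset_filter _ (range_subset_range.mpr (by omega))
  calc ∏ q ∈ (range (n + 1)).filter Nat.Prime, q ^ a.factorization q
      ∣ ∏ q ∈ (range (a + n + 1)).filter Nat.Prime, q ^ a.factorization q :=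
        prod_dvd_prod_of_subset _ _ _ hsub
    _ = ∏ q ∈ (range (a + n + 1)).filter Nat.Prime, q ^ padicValNat q a :=
        prod_congr rfl fun q hq => by rw [Nat.factorization_def _ (mem_filter.mp hq).2]
    _ = a := Nat.prod_pow_prime_padicValNat a ha _ (by omega)

lemma factorization_Dmn_of_lt {m n q : ℕ} (hq : q.Prime) (hnq : n < q) :
    (Dmn m n).factorization q = (m !).factorization q := by
  have hndvd : ¬ q ∣ ∏ r ∈ (range (n + 1)).filter Nat.Prime, r ^ (m !).factorization r := by
    rw [hq.prime.dvd_finsetProd_iff]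
    rintro ⟨r, hr, hqr⟩
    obtain ⟨hrn, hr⟩ := mem_filter.mp hr
    have := (Nat.prime_dvd_prime_iff_eq hq hr).mp (hq.dvd_of_dvd_pow hqr)
    simp only [mem_range] at hrn
    omega
  rw [Dmn, Nat.factorization_div (prod_pow_factorization_dvd (Nat.factorial_ne_zero m) n),
    Finsupp.tsub_apply, Nat.factorization_eq_zero_of_not_dvd hndvd, Nat.sub_zero]

lemma Dmn_ne_zero (m n : ℕ) : Dmn m n ≠ 0 :=
  (Nat.div_ne_zero_iff_of_dvd (prod_pow_factorization_dvd (Nat.factorial_ne_zero m) n)).mpr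
    ⟨Nat.factorial_ne_zero m,
      prod_ne_zero_iff.mpr fun _ hq => pow_ne_zero _ (mem_filter.mp hq).2.ne_zero⟩

lemma factorization_factorial_le_self {q : ℕ} (hq : q.Prime) (k : ℕ) : (k !).factorization q ≤ k :=
  (Nat.factorization_factorial_le_div_pred hq k).trans (Nat.div_le_self _ _)

-- Primes `q ≤ n` are paid for by `d_n^k` (as `v_q(k!) ≤ k`), primes `q > n` by the `q`-part of `m!`,
-- which `D_{m,n}` keeps.
lemma factorial_dvd_Dmn_mul_dlcm_pow {m n k : ℕ} (hk : k ≤ m) : k ! ∣ Dmn m n * dlcm n ^ k := by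
  have hd : dlcm n ^ k ≠ 0 := pow_ne_zero _ (dlcm_ne_zero n)
  rw [← Nat.factorization_le_iff_dvd (Nat.factorial_ne_zero k) (mul_ne_zero (Dmn_ne_zero m n) hd)]
  intro q
  by_cases hq : q.Prime
  swap
  · simp [Nat.factorization_eq_zero_of_not_prime _ hq]
  rw [Nat.factorization_mul (Dmn_ne_zero m n) hd, Nat.factorization_pow, Finsupp.add_apply,
    Finsupp.smul_apply, smul_eq_mul]
  rcases le_or_gt q n with hqn | hnq
  · have := one_le_factorization_dlcm hq hqn
    calc (k !).factorization q ≤ k := factorization_factorial_le_self hq k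
      _ ≤ k * (dlcm n).factorization q := Nat.le_mul_of_pos_right k this
      _ ≤ _ := Nat.le_add_left _ _
  · calc (k !).factorization q ≤ (m !).factorization q :=
          (Nat.factorization_le_iff_dvd (Nat.factorial_ne_zero k) (Nat.factorial_ne_zero m)).mpr
            (Nat.factorial_dvd_factorial hk) q
      _ = (Dmn m n).factorization q := (factorization_Dmn_of_lt hq hnq).symm
      _ ≤ _ := Nat.le_add_right _ _

lemma Dmn_mul_dlcm_pow_div_factorial_mem_bot {m n k : ℕ} (hk : k ≤ m) :
    (Dmn m n : ℚ) * (dlcm n : ℚ) ^ k / (k ! : ℚ) ∈ (⊥ : Subring ℚ) := by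
  rw [← Nat.cast_pow, ← Nat.cast_mul, ← Nat.cast_div_charZero (factorial_dvd_Dmn_mul_dlcm_pow hk)]
  exact natCast_mem _ _

lemma dlcm_div_sub_mem_bot {i j n : ℕ} (hij : i ≠ j) (hi : i ≤ n) (hj : j ≤ n) :
    (dlcm n : ℚ) / ((i : ℚ) - j) ∈ (⊥ : Subring ℚ) := by
  have hdvd : (i : ℤ) - j ∣ dlcm n := by
    rw [← Int.natAbs_dvd]
    exact Int.natCast_dvd_natCast.mpr (dvd_dlcm (by omega) (by omega))
  have hcast : ((dlcm n / ((i : ℤ) - j) : ℤ) : ℚ) = (dlcm n : ℚ) / ((i : ℚ) - j) := by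
    rw [Int.cast_div_charZero hdvd]
    push_cast
    rfl
  exact hcast ▸ intCast_mem _ _

lemma pow_sum_mul_prod_mem {F ι : Type*} [Field F] (S : Subring F) (s : Finset ι) (d : F)
    (a c : ι → F) (γ : ι → ℕ) (ha : ∀ i ∈ s, d / a i ∈ S) (hc : ∀ i ∈ s, c i ∈ S) :
    d ^ (∑ i ∈ s, γ i) * ∏ i ∈ s, ((-1) ^ γ i / a i ^ γ i * c i) ∈ S := by
  rw [← prod_pow_eq_pow_sum, ← prod_mul_distrib]
  refine prod_mem fun i hi => ?_
  have : d ^ γ i * ((-1) ^ γ i / a i ^ γ i * c i) = (-1) ^ γ i * (d / a i) ^ γ i * c i := by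
    rw [div_pow]
    ring
  rw [this]
  exact mul_mem (mul_mem (pow_mem (neg_mem (one_mem S)) _) (pow_mem (ha i hi) _)) (hc i hi)

lemma sum_erase_of_mem_lambdaSet {K L k : ℕ} {ℓ : Fin L} {γ : Fin L → ℕ}
    (hγ : γ ∈ lambdaSet K L ℓ k) : ∑ p ∈ univ.erase ℓ, γ p = K - k - 1 := by
  obtain ⟨hsum, hℓ⟩ := mem_filter.mp hγ
  rw [← Finset.Nat.mem_antidiagonalTuple.mp hsum, ← add_sum_erase univ γ (mem_univ ℓ), hℓ,
    zero_add]

theorem stmt14_general (K L : ℕ) :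
    (∀ k ≤ K - 1, ∃ z : ℤ,
      ((Dmn (K - 1) (L - 1) : ℚ) * (dlcm (L - 1) : ℚ) ^ k / (k.factorial : ℚ)) = (z : ℚ)) ∧
    (∀ k ≤ K - 1, ∀ ℓ : Fin L, ∃ z : ℤ,
      (Dmn (K - 1) (L - 1) : ℚ) / (k.factorial : ℚ) * (dlcm (L - 1) : ℚ) ^ (K - 1) *
          (((L - 1).choose (ℓ : ℕ) : ℚ)) ^ K *
          ∑ γ ∈ lambdaSet K L ℓ k, ∏ p ∈ Finset.univ.erase ℓ,
            ((-1) ^ (γ p) / (((ℓ : ℕ) : ℚ) - ((p : ℕ) : ℚ)) ^ (γ p) *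
              ((γ p + K - 1).choose (K - 1) : ℚ)) = (z : ℚ)) := by
  refine ⟨fun k hk => (Subring.mem_bot.mp (Dmn_mul_dlcm_pow_div_factorial_mem_bot hk)).imp
    fun _ => Eq.symm, fun k hk ℓ => (Subring.mem_bot.mp ?_).imp fun _ => Eq.symm⟩
  have hfactor : ∀ x : ℚ, (Dmn (K - 1) (L - 1) : ℚ) / (k ! : ℚ) * (dlcm (L - 1) : ℚ) ^ (K - 1) *
      ((L - 1).choose ℓ : ℚ) ^ K * x = (Dmn (K - 1) (L - 1) : ℚ) * (dlcm (L - 1) : ℚ) ^ k / k ! *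
      (((L - 1).choose ℓ : ℚ) ^ K * ((dlcm (L - 1) : ℚ) ^ (K - k - 1) * x)) := fun x => by
    rw [show K - 1 = k + (K - k - 1) by omega, pow_add]
    ring
  rw [hfactor, mul_sum]
  refine mul_mem (Dmn_mul_dlcm_pow_div_factorial_mem_bot hk)
    (mul_mem (pow_mem (natCast_mem _ _) _) (sum_mem fun γ hγ => ?_))
  rw [← sum_erase_of_mem_lambdaSet hγ]
  refine pow_sum_mul_prod_mem _ _ _ _ _ _ (fun p hp => ?_) (fun _ _ => natCast_mem _ _)
  exact dlcm_div_sub_mem_bot (fun h => (mem_erase.mp hp).1 (Fin.ext h).symm)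
    (by omega) (by omega)

theorem stmt14 (K L : ℕ) (hK : 1 ≤ K) (hL : 2 ≤ L) :
    (∀ k ≤ K - 1, ∃ z : ℤ,
      ((Dmn (K - 1) (L - 1) : ℚ) * (dlcm (L - 1) : ℚ) ^ k / (k.factorial : ℚ)) = (z : ℚ)) ∧
    (∀ k ≤ K - 1, ∀ ℓ : Fin L, ∃ z : ℤ,
      (Dmn (K - 1) (L - 1) : ℚ) / (k.factorial : ℚ) * (dlcm (L - 1) : ℚ) ^ (K - 1) *
          (((L - 1).choose (ℓ : ℕ) : ℚ)) ^ K *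
          ∑ γ ∈ lambdaSet K L ℓ k, ∏ p ∈ Finset.univ.erase ℓ,
            ((-1) ^ (γ p) / (((ℓ : ℕ) : ℚ) - ((p : ℕ) : ℚ)) ^ (γ p) *
              ((γ p + K - 1).choose (K - 1) : ℚ)) = (z : ℚ)) :=
  stmt14_general K L
end
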